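/- arXiv:1112.2909 — 6 statements merged into one kernel-verified Lean document; each statement's English description precedes it below -/
import Mathlib

section
/- Let (A, Δ) be a compact quantum semigroup admitting a Haar state h. Then the map u defined on the GNS space H_h ⊗ H_h by u(ā ⊗ b̄) = (Δ(a)(1 ⊗ b))‾ (where x̄ denotes the class of x in A/N_h) is a well-defined isometry. -/
open TensorProduct

/-!
Since `Δ` is multiplicative, `(Δ a (1 ⊗ b))^* (Δ a' (1 ⊗ b')) = (1 ⊗ b*) Δ(a* a') (1 ⊗ b')`.
For any `X`, `(h ⊗ h)((1 ⊗ c) X (1 ⊗ d)) = h(c ((h ⊗ id) X) d)`, and left invariance of the Haar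
state turns `(h ⊗ id) Δ(a* a')` into `h(a* a') 1`, leaving `h(a* a') h(b* b')`.
-/

theorem TensorProduct.lift_mul_compl₂_one_tmul_mul_mul_one_tmul
    {R A : Type*} [CommSemiring R] [Semiring A] [Algebra R A]
    (h : A →ₗ[R] R) (c d : A) (x : A ⊗[R] A) :
    lift (((LinearMap.mul R R).comp h).compl₂ h) (((1 : A) ⊗ₜ[R] c) * x * ((1 : A) ⊗ₜ[R] d))
      = h (c * lift ((LinearMap.lsmul R A).comp h) x * d) := by
  induction x using TensorProduct.induction_on with
  | zero => simp
  | tmul p q => simp [Algebra.TensorProduct.tmul_mul_tmul, mul_assoc]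
  | add x y hx hy => simp only [mul_add, add_mul, map_add, hx, hy]

theorem gns_multiplicative_isometry_well_defined_general
    {A : Type*} [CStarAlgebra A]
    (Δ : A →ₐ[ℂ] A ⊗[ℂ] A)
    (h : A →ₗ[ℂ] ℂ)
    -- `h` is a Haar state: `(h ⊗ id) Δ a = h a • 1 = (id ⊗ h) Δ a`
    (hHaarL : ∀ a, TensorProduct.lift ((LinearMap.lsmul ℂ A).comp h) (Δ a) = h a • 1) :
    -- `u` preserves the (h ⊗ h)-semi-inner product on elementary tensors
    ∀ a b a' b' : A,
      TensorProduct.lift (((LinearMap.mul ℂ ℂ).comp h).compl₂ h)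
          ((((1 : A) ⊗ₜ[ℂ] star b) * Δ (star a)) * (Δ a' * ((1 : A) ⊗ₜ[ℂ] b')))
        = h (star a * a') * h (star b * b') := by
  intro a b a' b'
  have hprod : (((1 : A) ⊗ₜ[ℂ] star b) * Δ (star a)) * (Δ a' * ((1 : A) ⊗ₜ[ℂ] b'))
      = ((1 : A) ⊗ₜ[ℂ] star b) * Δ (star a * a') * ((1 : A) ⊗ₜ[ℂ] b') := by
    rw [map_mul]; simp only [mul_assoc]
  rw [hprod, lift_mul_compl₂_one_tmul_mul_mul_one_tmul, hHaarL, mul_smul_one, smul_mul_assoc,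
    map_smul, smul_eq_mul]

/-- Let `(A, Δ)` be a compact quantum semigroup admitting a Haar state `h`.
Then `u(ā ⊗ b̄) = (Δ(a)(1 ⊗ b))‾` is a well-defined isometry on the GNS space `H_h ⊗ H_h`.

Mathlib has no minimal C*-tensor product nor GNS construction, so we work with the algebraic
tensor product `A ⊗[ℂ] A`; the star operation on it (which does not exist in Mathlib) is
encoded by an additive map `st` with `st (a ⊗ b) = star a ⊗ star b`, and `Δ` being a unital
*-homomorphism is the hypothesis `Δ (star a) = st (Δ a)`.  Well-definedness and isometry of
`u` on the GNS space are equivalent to the preservation of the semi-inner products induced by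
`h` (on `A`) and `h ⊗ h` (on `A ⊗ A`):
`⟨u(ā ⊗ b̄), u(ā' ⊗ b̄')⟩ = ⟨ā ⊗ b̄, ā' ⊗ b̄'⟩`, i.e.
`(h ⊗ h)((Δ a (1 ⊗ b))^* (Δ a' (1 ⊗ b'))) = h(a* a') h(b* b')`, where
`(Δ a (1 ⊗ b))^* = (1 ⊗ b*) Δ(a*)`. -/
theorem gns_multiplicative_isometry_well_defined
    {A : Type*} [CStarAlgebra A]
    (Δ : A →ₐ[ℂ] A ⊗[ℂ] A)
    -- the star operation on the algebraic tensor product, and `Δ` is a *-homomorphism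
    (st : A ⊗[ℂ] A → A ⊗[ℂ] A)
    (st_add : ∀ x y, st (x + y) = st x + st y)
    (st_tmul : ∀ a b : A, st (a ⊗ₜ[ℂ] b) = star a ⊗ₜ[ℂ] star b)
    (hΔstar : ∀ a, Δ (star a) = st (Δ a))
    -- coassociativity
    (hcoassoc : ∀ a, (Algebra.TensorProduct.assoc ℂ ℂ ℂ A A A)
        ((Algebra.TensorProduct.map Δ (AlgHom.id ℂ A)) (Δ a))
      = (Algebra.TensorProduct.map (AlgHom.id ℂ A) Δ) (Δ a))
    -- `h` is a state
    (h : A →ₗ[ℂ] ℂ) (h_unital : h 1 = 1) (h_cont : Continuous h)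
    (h_pos : ∀ a, 0 ≤ (h (star a * a)).re ∧ (h (star a * a)).im = 0)
    -- `h` is a Haar state: `(h ⊗ id) Δ a = h a • 1 = (id ⊗ h) Δ a`
    (hHaarL : ∀ a, TensorProduct.lift ((LinearMap.lsmul ℂ A).comp h) (Δ a) = h a • 1)
    (hHaarR : ∀ a, TensorProduct.lift (((LinearMap.lsmul ℂ A).comp h).flip) (Δ a) = h a • 1) :
    -- `u` preserves the (h ⊗ h)-semi-inner product on elementary tensors
    ∀ a b a' b' : A,
      TensorProduct.lift (((LinearMap.mul ℂ ℂ).comp h).compl₂ h)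
          ((((1 : A) ⊗ₜ[ℂ] star b) * Δ (star a)) * (Δ a' * ((1 : A) ⊗ₜ[ℂ] b')))
        = h (star a * a') * h (star b * b') :=
  gns_multiplicative_isometry_well_defined_general Δ h hHaarL
end

section
/- Let (A, Δ) be a compact quantum semigroup with Haar state h. The isometry u on H_h ⊗ H_h given by u(ā ⊗ b̄) = (Δ(a)(1 ⊗ b))‾ satisfies the pentagon equation u₁₂ u₁₃ u₂₃ = u₂₃ u₁₂. -/
/-!
Write `p₁₃, p₂₃ ∈ (A ⊗ A) ⊗ A` for the legs of `p ∈ A ⊗ A` and put `w = Δ(b)(1 ⊗ c)`.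
On `a ⊗ b ⊗ c` the left side first produces `(a ⊗ 1 ⊗ 1) w₂₃`; then `U₁₃` turns the factor
`a ⊗ 1 ⊗ 1` into `Δ(a)₁₃` and `U₁₂` turns that into `(Δ ⊗ id)Δ(a)`, both leaving `w₂₃` alone.
On the right, `U₁₂` gives `Δ(a)(1 ⊗ b) ⊗ c`, and `U₂₃`, which is multiplicative along
`(id ⊗ Δ)` on the first two legs, sends it to `(id ⊗ Δ)Δ(a) w₂₃`.
Coassociativity identifies the two results.
-/

open TensorProduct

namespace LinearMap

variable {R M : Type*} [CommSemiring R] [AddCommMonoid M] [Module R M]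

def leg₁₂ (T : M ⊗[R] M →ₗ[R] M ⊗[R] M) : (M ⊗[R] M) ⊗[R] M →ₗ[R] (M ⊗[R] M) ⊗[R] M :=
  T.rTensor M

def leg₂₃ (T : M ⊗[R] M →ₗ[R] M ⊗[R] M) : (M ⊗[R] M) ⊗[R] M →ₗ[R] (M ⊗[R] M) ⊗[R] M :=
  (TensorProduct.assoc R M M M).symm.toLinearMap ∘ₗ T.lTensor M ∘ₗ
    (TensorProduct.assoc R M M M).toLinearMap

def leg₁₃ (T : M ⊗[R] M →ₗ[R] M ⊗[R] M) : (M ⊗[R] M) ⊗[R] M →ₗ[R] (M ⊗[R] M) ⊗[R] M :=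
  (TensorProduct.comm R M M).toLinearMap.rTensor M ∘ₗ T.leg₂₃ ∘ₗ
    (TensorProduct.comm R M M).toLinearMap.rTensor M

end LinearMap

namespace TensorProduct

variable {R A : Type*} [CommSemiring R] [Semiring A] [Algebra R A]

def fusionMap (Δ : A →ₐ[R] A ⊗[R] A) : A ⊗[R] A →ₗ[R] A ⊗[R] A :=
  lift (((LinearMap.mul R (A ⊗[R] A)).comp Δ.toLinearMap).compl₂ (mk R A A 1))

variable (R A) in
def embed₁₃ : A ⊗[R] A →ₐ[R] (A ⊗[R] A) ⊗[R] A :=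
  Algebra.TensorProduct.map Algebra.TensorProduct.includeLeft (AlgHom.id R A)

variable (R A) in
def embed₂₃ : A ⊗[R] A →ₐ[R] (A ⊗[R] A) ⊗[R] A :=
  (Algebra.TensorProduct.assoc R R R A A A).symm.toAlgHom.comp Algebra.TensorProduct.includeRight

@[simp] lemma embed₁₃_tmul (a b : A) : embed₁₃ R A (a ⊗ₜ b) = (a ⊗ₜ 1) ⊗ₜ b := rfl

@[simp] lemma embed₂₃_tmul (a b : A) : embed₂₃ R A (a ⊗ₜ b) = (1 ⊗ₜ a) ⊗ₜ b := rfl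

variable (Δ : A →ₐ[R] A ⊗[R] A)

@[simp] lemma fusionMap_tmul (a b : A) : fusionMap Δ (a ⊗ₜ b) = Δ a * (1 ⊗ₜ b) := rfl

lemma fusionMap_tmul_one (a : A) : fusionMap Δ (a ⊗ₜ 1) = Δ a := by
  rw [fusionMap_tmul, Algebra.TensorProduct.one_def.symm, mul_one]

lemma fusionMap_tmul_one_mul (x : A) (t : A ⊗[R] A) :
    fusionMap Δ ((x ⊗ₜ 1) * t) = Δ x * fusionMap Δ t := by
  induction t using TensorProduct.induction_on with
  | zero => simp
  | tmul a b => simp [mul_assoc]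
  | add t t' ht ht' => simp only [mul_add, map_add, ht, ht']

lemma fusionMap_mul_one_tmul (t : A ⊗[R] A) (b : A) :
    fusionMap Δ (t * (1 ⊗ₜ b)) = fusionMap Δ t * (1 ⊗ₜ b) := by
  induction t using TensorProduct.induction_on with
  | zero => simp
  | tmul x y => simp [mul_assoc]
  | add t t' ht ht' => simp only [add_mul, map_add, ht, ht']

open LinearMap

lemma rTensor_comm_assoc_symm_tmul_mul_one_tmul (y z : A) (q : A ⊗[R] A) :
    (TensorProduct.comm R A A).toLinearMap.rTensor A
        ((TensorProduct.assoc R A A A).symm (y ⊗ₜ (q * (1 ⊗ₜ z))))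
      = embed₁₃ R A q * embed₂₃ R A (y ⊗ₜ z) := by
  induction q using TensorProduct.induction_on with
  | zero => simp
  | add q q' hq hq' => simp only [add_mul, tmul_add, map_add, hq, hq']
  | tmul u v => simp [Algebra.TensorProduct.tmul_mul_tmul]

lemma leg₂₃_fusionMap_tmul_one_mul (q : A ⊗[R] A) (Y : (A ⊗[R] A) ⊗[R] A) :
    (fusionMap Δ).leg₂₃ ((q ⊗ₜ 1) * Y)
      = (Algebra.TensorProduct.assoc R R R A A A).symm
          (Algebra.TensorProduct.map (AlgHom.id R A) Δ q) * (fusionMap Δ).leg₂₃ Y := by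
  induction q using TensorProduct.induction_on with
  | zero => simp
  | add q q' hq hq' => simp only [add_tmul, add_mul, map_add, hq, hq']
  | tmul x y =>
    induction Y using TensorProduct.induction_on with
    | zero => simp
    | add Y Y' hY hY' => simp only [mul_add, map_add, hY, hY']
    | tmul X z =>
      induction X using TensorProduct.induction_on with
      | zero => simp
      | add X X' hX hX' => simp only [add_tmul, mul_add, map_add, hX, hX']
      | tmul x' y' =>
        simp only [leg₂₃, Algebra.TensorProduct.tmul_mul_tmul, one_mul, LinearMap.comp_apply,
          LinearEquiv.coe_coe, TensorProduct.assoc_tmul, lTensor_tmul]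
        have hy : (y * y') ⊗ₜ[R] z = (y ⊗ₜ 1) * (y' ⊗ₜ z) := by
          rw [Algebra.TensorProduct.tmul_mul_tmul, one_mul]
        rw [hy, fusionMap_tmul_one_mul, Algebra.TensorProduct.map_tmul, AlgHom.id_apply]
        -- the linear associator is definitionally the algebra one, which is multiplicative
        change (Algebra.TensorProduct.assoc R R R A A A).symm _
          = (Algebra.TensorProduct.assoc R R R A A A).symm _ *
            (Algebra.TensorProduct.assoc R R R A A A).symm _
        rw [← map_mul, Algebra.TensorProduct.tmul_mul_tmul]

lemma leg₂₃_fusionMap_one_tmul_tmul (b c : A) :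
    (fusionMap Δ).leg₂₃ ((1 ⊗ₜ b) ⊗ₜ c) = embed₂₃ R A (fusionMap Δ (b ⊗ₜ c)) := rfl

lemma leg₁₃_fusionMap_embed₁₃_mul_embed₂₃ (p w : A ⊗[R] A) :
    (fusionMap Δ).leg₁₃ (embed₁₃ R A p * embed₂₃ R A w)
      = embed₁₃ R A (fusionMap Δ p) * embed₂₃ R A w := by
  induction p using TensorProduct.induction_on with
  | zero => simp
  | add p p' hp hp' => simp only [add_mul, map_add, hp, hp']
  | tmul s t =>
    induction w using TensorProduct.induction_on with
    | zero => simp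
    | add w w' hw hw' => simp only [mul_add, map_add, hw, hw']
    | tmul y z =>
      have : fusionMap Δ (s ⊗ₜ (t * z)) = fusionMap Δ (s ⊗ₜ t) * (1 ⊗ₜ z) := by
        rw [← fusionMap_mul_one_tmul, Algebra.TensorProduct.tmul_mul_tmul, mul_one]
      simp only [leg₁₃, leg₂₃, embed₁₃_tmul, embed₂₃_tmul, Algebra.TensorProduct.tmul_mul_tmul,
        one_mul, mul_one, LinearMap.comp_apply, LinearEquiv.coe_coe, rTensor_tmul, comm_tmul,
        TensorProduct.assoc_tmul, lTensor_tmul, this, rTensor_comm_assoc_symm_tmul_mul_one_tmul]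

lemma leg₁₂_fusionMap_mul_embed₂₃ (X : (A ⊗[R] A) ⊗[R] A) (w : A ⊗[R] A) :
    (fusionMap Δ).leg₁₂ (X * embed₂₃ R A w) = (fusionMap Δ).leg₁₂ X * embed₂₃ R A w := by
  induction X using TensorProduct.induction_on with
  | zero => simp
  | add X X' hX hX' => simp only [add_mul, map_add, hX, hX']
  | tmul t z =>
    induction w using TensorProduct.induction_on with
    | zero => simp
    | add w w' hw hw' => simp only [mul_add, map_add, hw, hw']
    | tmul y c =>
      simp [leg₁₂, Algebra.TensorProduct.tmul_mul_tmul, fusionMap_mul_one_tmul]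

lemma leg₁₂_fusionMap_embed₁₃ (p : A ⊗[R] A) :
    (fusionMap Δ).leg₁₂ (embed₁₃ R A p) = Algebra.TensorProduct.map Δ (AlgHom.id R A) p := by
  induction p using TensorProduct.induction_on with
  | zero => simp
  | add p p' hp hp' => simp only [map_add, hp, hp']
  | tmul a b => simp [leg₁₂, ← Algebra.TensorProduct.one_def]

theorem fusionMap_pentagon
    (hcoassoc : ∀ a, Algebra.TensorProduct.assoc R R R A A A
        (Algebra.TensorProduct.map Δ (AlgHom.id R A) (Δ a))
      = Algebra.TensorProduct.map (AlgHom.id R A) Δ (Δ a)) :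
    (fusionMap Δ).leg₁₂ ∘ₗ (fusionMap Δ).leg₁₃ ∘ₗ (fusionMap Δ).leg₂₃
      = (fusionMap Δ).leg₂₃ ∘ₗ (fusionMap Δ).leg₁₂ := by
  refine TensorProduct.ext_threefold fun a b c => ?_
  set w := fusionMap Δ (b ⊗ₜ c)
  have hsplit : (a ⊗ₜ[R] b) ⊗ₜ[R] c = ((a ⊗ₜ 1) ⊗ₜ 1) * ((1 ⊗ₜ b) ⊗ₜ c) := by
    simp [Algebra.TensorProduct.tmul_mul_tmul]
  calc (fusionMap Δ).leg₁₂ ((fusionMap Δ).leg₁₃ ((fusionMap Δ).leg₂₃ ((a ⊗ₜ b) ⊗ₜ c)))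
      = (fusionMap Δ).leg₁₂ ((fusionMap Δ).leg₁₃ (embed₁₃ R A (a ⊗ₜ 1) * embed₂₃ R A w)) := by
        rw [hsplit, leg₂₃_fusionMap_tmul_one_mul, leg₂₃_fusionMap_one_tmul_tmul,
          Algebra.TensorProduct.map_tmul, AlgHom.id_apply, map_one,
          Algebra.TensorProduct.one_def]
        rfl
    _ = (fusionMap Δ).leg₁₂ (embed₁₃ R A (Δ a) * embed₂₃ R A w) := by
        rw [leg₁₃_fusionMap_embed₁₃_mul_embed₂₃, fusionMap_tmul_one]
    _ = Algebra.TensorProduct.map Δ (AlgHom.id R A) (Δ a) * embed₂₃ R A w := by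
        rw [leg₁₂_fusionMap_mul_embed₂₃, leg₁₂_fusionMap_embed₁₃]
    _ = (Algebra.TensorProduct.assoc R R R A A A).symm
          (Algebra.TensorProduct.map (AlgHom.id R A) Δ (Δ a)) * embed₂₃ R A w := by
        rw [← hcoassoc, AlgEquiv.symm_apply_apply]
    _ = (fusionMap Δ).leg₂₃ ((Δ a ⊗ₜ 1) * ((1 ⊗ₜ b) ⊗ₜ c)) := by
        rw [leg₂₃_fusionMap_tmul_one_mul, leg₂₃_fusionMap_one_tmul_tmul]
    _ = (fusionMap Δ).leg₂₃ ((fusionMap Δ).leg₁₂ ((a ⊗ₜ b) ⊗ₜ c)) := by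
        simp [leg₁₂, Algebra.TensorProduct.tmul_mul_tmul]

end TensorProduct

theorem gns_isometry_pentagon_general
    {A : Type*} [CStarAlgebra A]
    (Δ : A →ₐ[ℂ] A ⊗[ℂ] A)
    (hcoassoc : ∀ a, (Algebra.TensorProduct.assoc ℂ ℂ ℂ A A A)
        ((Algebra.TensorProduct.map Δ (AlgHom.id ℂ A)) (Δ a))
      = (Algebra.TensorProduct.map (AlgHom.id ℂ A) Δ) (Δ a)) :
    -- the pentagon equation for `U : a ⊗ b ↦ Δ(a)(1 ⊗ b)`
    letI U : A ⊗[ℂ] A →ₗ[ℂ] A ⊗[ℂ] A :=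
      TensorProduct.lift
        (((LinearMap.mul ℂ (A ⊗[ℂ] A)).comp Δ.toLinearMap).compl₂ (TensorProduct.mk ℂ A A 1))
    letI assoc := (TensorProduct.assoc ℂ A A A).toLinearMap
    letI assoc' := (TensorProduct.assoc ℂ A A A).symm.toLinearMap
    letI σ : A ⊗[ℂ] A →ₗ[ℂ] A ⊗[ℂ] A := (TensorProduct.comm ℂ A A).toLinearMap
    letI U₁₂ := LinearMap.rTensor A U
    letI U₂₃ := assoc' ∘ₗ LinearMap.lTensor A U ∘ₗ assoc
    letI σ₁₂ := LinearMap.rTensor A σ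
    letI U₁₃ := σ₁₂ ∘ₗ U₂₃ ∘ₗ σ₁₂
    U₁₂ ∘ₗ U₁₃ ∘ₗ U₂₃ = U₂₃ ∘ₗ U₁₂ :=
  fusionMap_pentagon Δ hcoassoc

/-- Let `(A, Δ)` be a compact quantum semigroup with Haar state `h`.  The
isometry `u(ā ⊗ b̄) = (Δ(a)(1 ⊗ b))‾` on `H_h ⊗ H_h` satisfies the pentagon equation
`u₁₂ u₁₃ u₂₃ = u₂₃ u₁₂`.

As Mathlib has neither the minimal C*-tensor product nor the GNS construction, we work with
the algebraic tensor product: `u` is modelled by the linear map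
`U : A ⊗ A → A ⊗ A, a ⊗ b ↦ Δ(a)(1 ⊗ b)` on the dense subspace `A ⊗ A` of `H_h ⊗ H_h`
(on which the paper's computation takes place), `(A ⊗ A) ⊗ A` models the triple tensor
product, the legs are `U₁₂ = U ⊗ I`, `U₂₃ = I ⊗ U`, `U₁₃ = σ₁₂ U₂₃ σ₁₂` with `σ` the flip,
and the star operation on `A ⊗ A` is encoded by the additive map `st`. -/
theorem gns_isometry_pentagon
    {A : Type*} [CStarAlgebra A]
    (Δ : A →ₐ[ℂ] A ⊗[ℂ] A)
    (st : A ⊗[ℂ] A → A ⊗[ℂ] A)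
    (st_add : ∀ x y, st (x + y) = st x + st y)
    (st_tmul : ∀ a b : A, st (a ⊗ₜ[ℂ] b) = star a ⊗ₜ[ℂ] star b)
    (hΔstar : ∀ a, Δ (star a) = st (Δ a))
    (hcoassoc : ∀ a, (Algebra.TensorProduct.assoc ℂ ℂ ℂ A A A)
        ((Algebra.TensorProduct.map Δ (AlgHom.id ℂ A)) (Δ a))
      = (Algebra.TensorProduct.map (AlgHom.id ℂ A) Δ) (Δ a))
    -- `h` is a Haar state
    (h : A →ₗ[ℂ] ℂ) (h_unital : h 1 = 1) (h_cont : Continuous h)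
    (h_pos : ∀ a, 0 ≤ (h (star a * a)).re ∧ (h (star a * a)).im = 0)
    (hHaarL : ∀ a, TensorProduct.lift ((LinearMap.lsmul ℂ A).comp h) (Δ a) = h a • 1)
    (hHaarR : ∀ a, TensorProduct.lift (((LinearMap.lsmul ℂ A).comp h).flip) (Δ a) = h a • 1) :
    -- the pentagon equation for `U : a ⊗ b ↦ Δ(a)(1 ⊗ b)`
    letI U : A ⊗[ℂ] A →ₗ[ℂ] A ⊗[ℂ] A :=
      TensorProduct.lift
        (((LinearMap.mul ℂ (A ⊗[ℂ] A)).comp Δ.toLinearMap).compl₂ (TensorProduct.mk ℂ A A 1))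
    letI assoc := (TensorProduct.assoc ℂ A A A).toLinearMap
    letI assoc' := (TensorProduct.assoc ℂ A A A).symm.toLinearMap
    letI σ : A ⊗[ℂ] A →ₗ[ℂ] A ⊗[ℂ] A := (TensorProduct.comm ℂ A A).toLinearMap
    letI U₁₂ := LinearMap.rTensor A U
    letI U₂₃ := assoc' ∘ₗ LinearMap.lTensor A U ∘ₗ assoc
    letI σ₁₂ := LinearMap.rTensor A σ
    letI U₁₃ := σ₁₂ ∘ₗ U₂₃ ∘ₗ σ₁₂
    U₁₂ ∘ₗ U₁₃ ∘ₗ U₂₃ = U₂₃ ∘ₗ U₁₂ :=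
  gns_isometry_pentagon_general Δ hcoassoc
end

section
/- Let (A, Δ) be a compact quantum semigroup with Haar state h, π_h the GNS representation, and u the isometry on H_h ⊗ H_h defined by u(ā ⊗ b̄) = (Δ(a)(1 ⊗ b))‾. Then u*(π_h ⊗ π_h)(Δ(a)) u = π_h(a) ⊗ I for all a ∈ A. -/
/-!
Multiplicativity of `Δ` collapses the product to `(1 ⊗ c*) Δ(b* a b') (1 ⊗ c')`. The functional
`h ⊗ h` factors as `h ∘ (h ⊗ id)`, the slice map `h ⊗ id` is a bimodule map for the second leg,
and left invariance of `h` turns `(h ⊗ id) Δ(b* a b')` into `h(b* a b') · 1`.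
-/

open TensorProduct

section Slice

variable {R A : Type*} [CommSemiring R] [Semiring A] [Algebra R A] (h : A →ₗ[R] R)

theorem lift_mul_compl₂_eq_comp_lift_lsmul :
    TensorProduct.lift (((LinearMap.mul R R).comp h).compl₂ h)
      = h ∘ₗ TensorProduct.lift ((LinearMap.lsmul R A).comp h) :=
  TensorProduct.ext' fun x y => by simp

theorem lift_lsmul_one_tmul_mul_mul_one_tmul (p q : A) (t : A ⊗[R] A) :
    TensorProduct.lift ((LinearMap.lsmul R A).comp h) ((1 ⊗ₜ p) * t * (1 ⊗ₜ q))
      = p * TensorProduct.lift ((LinearMap.lsmul R A).comp h) t * q := by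
  induction t using TensorProduct.induction_on with
  | zero => simp
  | tmul x y => simp [Algebra.TensorProduct.tmul_mul_tmul]
  | add s t hs ht => simp only [mul_add, add_mul, map_add, hs, ht]

end Slice

theorem gns_isometry_implements_comultiplication_general
    {A : Type*} [CStarAlgebra A]
    (Δ : A →ₐ[ℂ] A ⊗[ℂ] A)
    (h : A →ₗ[ℂ] ℂ)
    (hHaarL : ∀ a, TensorProduct.lift ((LinearMap.lsmul ℂ A).comp h) (Δ a) = h a • 1) :
    ∀ a b c b' c' : A,
      TensorProduct.lift (((LinearMap.mul ℂ ℂ).comp h).compl₂ h)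
          ((((1 : A) ⊗ₜ[ℂ] star c) * Δ (star b)) * (Δ a * (Δ b' * ((1 : A) ⊗ₜ[ℂ] c'))))
        = h (star b * (a * b')) * h (star c * c') := by
  intro a b c b' c'
  have hΔ : (((1 : A) ⊗ₜ[ℂ] star c) * Δ (star b)) * (Δ a * (Δ b' * ((1 : A) ⊗ₜ[ℂ] c')))
      = ((1 : A) ⊗ₜ[ℂ] star c) * Δ (star b * (a * b')) * ((1 : A) ⊗ₜ[ℂ] c') := by
    simp only [map_mul, mul_assoc]
  rw [hΔ, lift_mul_compl₂_eq_comp_lift_lsmul, LinearMap.comp_apply,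
    lift_lsmul_one_tmul_mul_mul_one_tmul, hHaarL, mul_smul_one, smul_mul_assoc, map_smul,
    smul_eq_mul]

/-- Let `(A, Δ)` be a compact quantum semigroup with Haar state `h`, `π_h` the
GNS representation, and `u` the isometry on `H_h ⊗ H_h` with `u(ā ⊗ b̄) = (Δ(a)(1 ⊗ b))‾`.
Then `u* (π_h ⊗ π_h)(Δ a) u = π_h(a) ⊗ I` for all `a ∈ A`.

As Mathlib lacks both the minimal C*-tensor product and the GNS construction, we express this
operator identity through all its matrix coefficients on the dense subspace `A ⊗ A` of
`H_h ⊗ H_h` (which determine it, `u` being an isometry):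
`⟨u(b̄ ⊗ c̄), (π_h ⊗ π_h)(Δ a) u(b̄' ⊗ c̄')⟩ = ⟨b̄ ⊗ c̄, (π_h(a) ⊗ I)(b̄' ⊗ c̄')⟩`, i.e.
`(h ⊗ h)((Δ b (1 ⊗ c))^* · Δ a · Δ b' (1 ⊗ c')) = h(b* (a b')) h(c* c')`,
where `(Δ b (1 ⊗ c))^* = (1 ⊗ c*) Δ(b*)` and the star on `A ⊗ A` is encoded by `st`. -/
theorem gns_isometry_implements_comultiplication
    {A : Type*} [CStarAlgebra A]
    (Δ : A →ₐ[ℂ] A ⊗[ℂ] A)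
    (st : A ⊗[ℂ] A → A ⊗[ℂ] A)
    (st_add : ∀ x y, st (x + y) = st x + st y)
    (st_tmul : ∀ a b : A, st (a ⊗ₜ[ℂ] b) = star a ⊗ₜ[ℂ] star b)
    (hΔstar : ∀ a, Δ (star a) = st (Δ a))
    (hcoassoc : ∀ a, (Algebra.TensorProduct.assoc ℂ ℂ ℂ A A A)
        ((Algebra.TensorProduct.map Δ (AlgHom.id ℂ A)) (Δ a))
      = (Algebra.TensorProduct.map (AlgHom.id ℂ A) Δ) (Δ a))
    (h : A →ₗ[ℂ] ℂ) (h_unital : h 1 = 1) (h_cont : Continuous h)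
    (h_pos : ∀ a, 0 ≤ (h (star a * a)).re ∧ (h (star a * a)).im = 0)
    (hHaarL : ∀ a, TensorProduct.lift ((LinearMap.lsmul ℂ A).comp h) (Δ a) = h a • 1)
    (hHaarR : ∀ a, TensorProduct.lift (((LinearMap.lsmul ℂ A).comp h).flip) (Δ a) = h a • 1) :
    ∀ a b c b' c' : A,
      TensorProduct.lift (((LinearMap.mul ℂ ℂ).comp h).compl₂ h)
          ((((1 : A) ⊗ₜ[ℂ] star c) * Δ (star b)) * (Δ a * (Δ b' * ((1 : A) ⊗ₜ[ℂ] c'))))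
        = h (star b * (a * b')) * h (star c * c') :=
  gns_isometry_implements_comultiplication_general Δ h hHaarL
end

section
/- Let S be the unilateral shift on ℓ²(ℕ). If a unitary u on H ⊗ H satisfies u(S ⊗ I) = (S ⊗ S)u, the pentagon equation, and u(e_0 ⊗ e_i) = e_0 ⊗ e_i for all i, then u(e_k ⊗ e_i) = e_k ⊗ e_{k+i} for all k, i ≥ 0; in particular the range of u is contained in the closed span of {e_i ⊗ e_j : j ≥ i}, contradicting surjectivity. -/
/-!
Intertwining gives `u (e_{k+1} ⊗ e_i) = (S ⊗ S) u (e_k ⊗ e_i)`, so by induction from the fixed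
row `k = 0` one gets `u (e_k ⊗ e_i) = e_k ⊗ e_{k+i}`. Hence `u` maps the basis, and by continuity
all of `H ⊗ H`, into the closed span of the `e_i ⊗ e_j` with `i ≤ j`, which is orthogonal to
`e_1 ⊗ e_0`.
-/

open Submodule

theorem apply_eq_shift_of_semiconj {M : Type*} (b : ℕ × ℕ → M) (u S₁ SS : M → M)
    (hS₁ : ∀ i j, S₁ (b (i, j)) = b (i + 1, j))
    (hSS : ∀ i j, SS (b (i, j)) = b (i + 1, j + 1))
    (hint : Function.Semiconj u S₁ SS) (hfix : ∀ i, u (b (0, i)) = b (0, i)) :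
    ∀ k i, u (b (k, i)) = b (k, k + i) := by
  intro k
  induction k with
  | zero => simpa using hfix
  | succ k ih =>
    intro i
    rw [← hS₁, hint, ih, hSS, Nat.add_right_comm]

theorem HilbertBasis.apply_mem_of_forall_apply_mem {ι 𝕜 E F : Type*} [RCLike 𝕜]
    [NormedAddCommGroup E] [InnerProductSpace 𝕜 E] [AddCommGroup F] [TopologicalSpace F]
    [Module 𝕜 F] (b : HilbertBasis ι 𝕜 E) (f : E →L[𝕜] F) {K : Submodule 𝕜 F}
    (hK : IsClosed (K : Set F)) (hb : ∀ i, f (b i) ∈ K) (x : E) : f x ∈ K := by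
  have hspan : span 𝕜 (Set.range b) ≤ K.comap f.toLinearMap :=
    span_le.mpr <| Set.range_subset_iff.mpr hb
  have hclosure := (span 𝕜 (Set.range b)).topologicalClosure_minimal hspan
    (hK.preimage f.continuous)
  rw [b.dense_span] at hclosure
  exact hclosure mem_top

theorem Orthonormal.notMem_topologicalClosure_span_image {ι 𝕜 E : Type*} [RCLike 𝕜]
    [NormedAddCommGroup E] [InnerProductSpace 𝕜 E] {v : ι → E} (hv : Orthonormal 𝕜 v)
    {s : Set ι} {i : ι} (hi : i ∉ s) : v i ∉ (span 𝕜 (v '' s)).topologicalClosure := by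
  intro hmem
  have hspan : span 𝕜 (v '' s) ≤ LinearMap.ker (innerSL 𝕜 (v i)).toLinearMap := by
    rw [span_le]
    rintro _ ⟨j, hj, rfl⟩
    simp [hv.inner_eq_zero (ne_of_mem_of_not_mem hj hi).symm]
  have hker := (span 𝕜 (v '' s)).topologicalClosure_minimal hspan
    (innerSL 𝕜 (v i)).isClosed_ker hmem
  exact hv.ne_zero i (by simpa using hker)

theorem shift_unitary_fixing_first_row_not_surjective_general
    {HH : Type*}
    [NormedAddCommGroup HH] [InnerProductSpace ℂ HH]
    (E : HilbertBasis (ℕ × ℕ) ℂ HH)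
    (S₁ SS : HH →L[ℂ] HH)
    (hS₁ : ∀ i j, S₁ (E (i, j)) = E (i + 1, j))
    (hSS : ∀ i j, SS (E (i, j)) = E (i + 1, j + 1))
    (u : HH →L[ℂ] HH)
    -- the intertwining relation `u(S ⊗ I) = (S ⊗ S)u`, the pentagon equation, and
    -- `u(e₀ ⊗ e_i) = e₀ ⊗ e_i`
    (hint : u * S₁ = SS * u)
    (hfix : ∀ i : ℕ, u (E (0, i)) = E (0, i)) :
    (∀ k i : ℕ, u (E (k, i)) = E (k, k + i))
    ∧ (∀ v : HH, u v ∈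
        (Submodule.span ℂ {w : HH | ∃ i j : ℕ, i ≤ j ∧ w = E (i, j)}).topologicalClosure)
    ∧ ¬ Function.Surjective u := by
  have hupper : {w : HH | ∃ i j : ℕ, i ≤ j ∧ w = E (i, j)} = E '' {p | p.1 ≤ p.2} := by
    ext w
    simp [eq_comm]
  have hdiag := apply_eq_shift_of_semiconj E u S₁ SS hS₁ hSS
    (fun x => congr($hint x)) hfix
  have hrange : ∀ v : HH, u v ∈ (span ℂ (E '' {p | p.1 ≤ p.2})).topologicalClosure :=
    E.apply_mem_of_forall_apply_mem u (isClosed_topologicalClosure _) fun ⟨k, i⟩ =>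
      le_topologicalClosure _ <| subset_span ⟨(k, k + i), Nat.le_add_right k i, (hdiag k i).symm⟩
  refine ⟨hdiag, hupper ▸ hrange, fun hsurj => ?_⟩
  obtain ⟨v, hv⟩ := hsurj (E (1, 0))
  exact E.orthonormal.notMem_topologicalClosure_span_image (s := {p | p.1 ≤ p.2}) (by simp)
    (hv ▸ hrange v)

/-- Let `S` be the unilateral shift on `ℓ²(ℕ)`.  If a unitary `u` on `H ⊗ H`
satisfies `u(S ⊗ I) = (S ⊗ S)u`, the pentagon equation, and `u(e₀ ⊗ e_i) = e₀ ⊗ e_i` for all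
`i`, then `u(e_k ⊗ e_i) = e_k ⊗ e_{k+i}` for all `k, i ≥ 0`; in particular the range of `u`
is contained in the closed span of `{e_i ⊗ e_j : j ≥ i}`, contradicting surjectivity.

`H ⊗ H` and `H ⊗ H ⊗ H` are modelled by Hilbert spaces `HH`, `HHH` with Hilbert bases
`E : ℕ × ℕ → HH` and `F : ℕ × ℕ × ℕ → HHH`; the legs `u₁₂, u₂₃, u₁₃` are characterised by
their matrix coefficients, and `S ⊗ I`, `S ⊗ S` by their action on the basis. -/
theorem shift_unitary_fixing_first_row_not_surjective
    {H HH HHH : Type*}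
    [NormedAddCommGroup H] [InnerProductSpace ℂ H] [CompleteSpace H]
    [NormedAddCommGroup HH] [InnerProductSpace ℂ HH] [CompleteSpace HH]
    [NormedAddCommGroup HHH] [InnerProductSpace ℂ HHH] [CompleteSpace HHH]
    (e : HilbertBasis ℕ ℂ H) (E : HilbertBasis (ℕ × ℕ) ℂ HH)
    (F : HilbertBasis (ℕ × ℕ × ℕ) ℂ HHH)
    (S : H →L[ℂ] H) (hS : ∀ n, S (e n) = e (n + 1))
    (S₁ SS : HH →L[ℂ] HH)
    (hS₁ : ∀ i j, S₁ (E (i, j)) = E (i + 1, j))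
    (hSS : ∀ i j, SS (E (i, j)) = E (i + 1, j + 1))
    (u : HH →L[ℂ] HH) (hu : u ∈ unitary (HH →L[ℂ] HH))
    (u₁₂ u₁₃ u₂₃ : HHH →L[ℂ] HHH)
    (h12 : ∀ i j k a b c, (inner ℂ (F (i, j, k)) (u₁₂ (F (a, b, c))) : ℂ)
      = (if k = c then (1 : ℂ) else 0) * inner ℂ (E (i, j)) (u (E (a, b))))
    (h23 : ∀ i j k a b c, (inner ℂ (F (i, j, k)) (u₂₃ (F (a, b, c))) : ℂ)
      = (if i = a then (1 : ℂ) else 0) * inner ℂ (E (j, k)) (u (E (b, c))))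
    (h13 : ∀ i j k a b c, (inner ℂ (F (i, j, k)) (u₁₃ (F (a, b, c))) : ℂ)
      = (if j = b then (1 : ℂ) else 0) * inner ℂ (E (i, k)) (u (E (a, c))))
    -- the intertwining relation `u(S ⊗ I) = (S ⊗ S)u`, the pentagon equation, and
    -- `u(e₀ ⊗ e_i) = e₀ ⊗ e_i`
    (hint : u * S₁ = SS * u)
    (hpent : u₁₂ * u₁₃ * u₂₃ = u₂₃ * u₁₂)
    (hfix : ∀ i : ℕ, u (E (0, i)) = E (0, i)) :
    (∀ k i : ℕ, u (E (k, i)) = E (k, k + i))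
    ∧ (∀ v : HH, u v ∈
        (Submodule.span ℂ {w : HH | ∃ i j : ℕ, i ≤ j ∧ w = E (i, j)}).topologicalClosure)
    ∧ ¬ Function.Surjective u :=
  shift_unitary_fixing_first_row_not_surjective_general E S₁ SS hS₁ hSS u hint hfix
end

section
/- Let A be a unital C*-algebra and W : A ⊗ A → A ⊗ A a unital *-homomorphism satisfying the pentagon equation W₁₂ W₁₃ W₂₃ = W₂₃ W₁₂ (as linear operators on A ⊗ A ⊗ A). Then Δ := W ∘ Δᴸ, where Δᴸ(a) = a ⊗ 1, is a coassociative comultiplication on A: (Δ ⊗ id)Δ = (id ⊗ Δ)Δ. -/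
/-!
Evaluate the pentagon equation on `(a ⊗ 1) ⊗ 1`. Since `W (1 ⊗ 1) = 1 ⊗ 1`, the leg `W₂₃` fixes
this vector, while `W₁₃` sends it to `(Δ a)₁₃`, i.e. `Δ a` with a `1` inserted in the middle; then
`W₁₂` turns that into `(Δ ⊗ id) (Δ a)`. On the other side `W₁₂` produces `Δ a ⊗ 1`, and `W₂₃`
sends this to `(id ⊗ Δ) (Δ a)`.
-/

open TensorProduct

namespace TensorProduct.Pentagon

variable {R M : Type*} [CommSemiring R] [AddCommMonoid M] [Module R M]

def leg₁₂ (W : M ⊗[R] M →ₗ[R] M ⊗[R] M) : (M ⊗[R] M) ⊗[R] M →ₗ[R] (M ⊗[R] M) ⊗[R] M :=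
  W.rTensor M

def leg₂₃ (W : M ⊗[R] M →ₗ[R] M ⊗[R] M) : (M ⊗[R] M) ⊗[R] M →ₗ[R] (M ⊗[R] M) ⊗[R] M :=
  (TensorProduct.assoc R M M M).symm.toLinearMap ∘ₗ W.lTensor M ∘ₗ
    (TensorProduct.assoc R M M M).toLinearMap

def leg₁₃ (W : M ⊗[R] M →ₗ[R] M ⊗[R] M) : (M ⊗[R] M) ⊗[R] M →ₗ[R] (M ⊗[R] M) ⊗[R] M :=
  (TensorProduct.comm R M M).toLinearMap.rTensor M ∘ₗ leg₂₃ W ∘ₗ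
    (TensorProduct.comm R M M).toLinearMap.rTensor M

theorem leg₁₂_tmul (W : M ⊗[R] M →ₗ[R] M ⊗[R] M) (u : M ⊗[R] M) (z : M) :
    leg₁₂ W (u ⊗ₜ z) = W u ⊗ₜ z :=
  rfl

theorem leg₂₃_tmul (W : M ⊗[R] M →ₗ[R] M ⊗[R] M) (x y z : M) :
    leg₂₃ W ((x ⊗ₜ y) ⊗ₜ z) = (TensorProduct.assoc R M M M).symm (x ⊗ₜ W (y ⊗ₜ z)) :=
  rfl

theorem rTensor_comm_assoc_symm_tmul (m : M) (v : M ⊗[R] M) :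
    (TensorProduct.comm R M M).toLinearMap.rTensor M
        ((TensorProduct.assoc R M M M).symm (m ⊗ₜ v)) =
      ((TensorProduct.mk R M M).flip m).rTensor M v := by
  induction v using TensorProduct.induction_on with
  | zero => simp only [tmul_zero, map_zero]
  | tmul y z => rfl
  | add v w hv hw => simp only [tmul_add, map_add, hv, hw]

section Unital

variable {R A : Type*} [CommSemiring R] [Semiring A] [Algebra R A]

def comul (W : A ⊗[R] A →ₗ[R] A ⊗[R] A) : A →ₗ[R] A ⊗[R] A :=
  W ∘ₗ (TensorProduct.mk R A A).flip 1

variable {W : A ⊗[R] A →ₗ[R] A ⊗[R] A}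

theorem leg₂₃_tmul_one_tmul_one (hW : W (1 ⊗ₜ 1) = 1 ⊗ₜ 1) (x : A) :
    leg₂₃ W ((x ⊗ₜ 1) ⊗ₜ 1) = (x ⊗ₜ 1) ⊗ₜ 1 := by
  rw [leg₂₃_tmul, hW, assoc_symm_tmul]

theorem leg₁₃_tmul_one_tmul_one (x : A) :
    leg₁₃ W ((x ⊗ₜ 1) ⊗ₜ 1) = ((TensorProduct.mk R A A).flip 1).rTensor A (comul W x) :=
  rTensor_comm_assoc_symm_tmul 1 (W (x ⊗ₜ 1))

theorem leg₁₂_rTensor_flip_mk_one (v : A ⊗[R] A) :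
    leg₁₂ W (((TensorProduct.mk R A A).flip 1).rTensor A v) = (comul W).rTensor A v := by
  rw [leg₁₂, ← LinearMap.comp_apply, ← LinearMap.rTensor_comp, comul]

theorem leg₂₃_tmul_one (u : A ⊗[R] A) :
    leg₂₃ W (u ⊗ₜ 1) = (TensorProduct.assoc R A A A).symm ((comul W).lTensor A u) := by
  induction u using TensorProduct.induction_on with
  | zero => simp only [zero_tmul, map_zero]
  | tmul x y => rfl
  | add u v hu hv => simp only [add_tmul, map_add, hu, hv]

theorem assoc_rTensor_comul_comul_eq_lTensor (hW : W (1 ⊗ₜ 1) = 1 ⊗ₜ 1)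
    (hpent : leg₁₂ W ∘ₗ leg₁₃ W ∘ₗ leg₂₃ W = leg₂₃ W ∘ₗ leg₁₂ W) (a : A) :
    TensorProduct.assoc R A A A ((comul W).rTensor A (comul W a)) =
      (comul W).lTensor A (comul W a) := by
  have h := LinearMap.congr_fun hpent ((a ⊗ₜ 1) ⊗ₜ 1)
  simp only [LinearMap.comp_apply, leg₂₃_tmul_one_tmul_one hW, leg₁₃_tmul_one_tmul_one,
    leg₁₂_rTensor_flip_mk_one, leg₁₂_tmul, leg₂₃_tmul_one] at h
  rw [h, LinearEquiv.apply_symm_apply]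
  rfl

end Unital

end TensorProduct.Pentagon

open TensorProduct.Pentagon in
theorem pentagon_homomorphism_gives_comultiplication_general
    {A : Type*} [CStarAlgebra A]
    (W : A ⊗[ℂ] A →ₐ[ℂ] A ⊗[ℂ] A)
    (hpent :
      letI assoc := (TensorProduct.assoc ℂ A A A).toLinearMap
      letI assoc' := (TensorProduct.assoc ℂ A A A).symm.toLinearMap
      letI σ : A ⊗[ℂ] A →ₗ[ℂ] A ⊗[ℂ] A := (TensorProduct.comm ℂ A A).toLinearMap
      letI W₁₂ := LinearMap.rTensor A W.toLinearMap
      letI W₂₃ := assoc' ∘ₗ LinearMap.lTensor A W.toLinearMap ∘ₗ assoc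
      letI σ₁₂fl := LinearMap.rTensor A σ
      letI W₁₃ := σ₁₂fl ∘ₗ W₂₃ ∘ₗ σ₁₂fl
      W₁₂ ∘ₗ W₁₃ ∘ₗ W₂₃ = W₂₃ ∘ₗ W₁₂) :
    letI Δ : A →ₐ[ℂ] A ⊗[ℂ] A :=
      W.comp (Algebra.TensorProduct.includeLeft : A →ₐ[ℂ] A ⊗[ℂ] A)
    ∀ a, (Algebra.TensorProduct.assoc ℂ ℂ ℂ A A A)
        ((Algebra.TensorProduct.map Δ (AlgHom.id ℂ A)) (Δ a))
      = (Algebra.TensorProduct.map (AlgHom.id ℂ A) Δ) (Δ a) :=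
  assoc_rTensor_comul_comul_eq_lTensor (W := W.toLinearMap)
    (by rw [AlgHom.toLinearMap_apply, ← Algebra.TensorProduct.one_def, map_one]) hpent

/-- Let `A` be a unital C*-algebra and `W : A ⊗ A → A ⊗ A` a unital
*-homomorphism satisfying the pentagon equation `W₁₂ W₁₃ W₂₃ = W₂₃ W₁₂` (as linear
operators on `A ⊗ A ⊗ A`).  Then `Δ := W ∘ Δᴸ`, `Δᴸ(a) = a ⊗ 1`, is a coassociative
comultiplication on `A`.

The tensor product is the algebraic one (Mathlib has no minimal C*-tensor product), the star
operation on `A ⊗ A` is encoded by the additive map `st` (so `W` being a *-homomorphism is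
`W ∘ st = st ∘ W`), the triple tensor product is `(A ⊗ A) ⊗ A`, the legs are obtained with
`rTensor`/`lTensor`, the associator and the flip `Σ`, and coassociativity is stated up to
the associator. -/
theorem pentagon_homomorphism_gives_comultiplication
    {A : Type*} [CStarAlgebra A]
    (W : A ⊗[ℂ] A →ₐ[ℂ] A ⊗[ℂ] A)
    (st : A ⊗[ℂ] A → A ⊗[ℂ] A)
    (st_add : ∀ x y, st (x + y) = st x + st y)
    (st_tmul : ∀ a b : A, st (a ⊗ₜ[ℂ] b) = star a ⊗ₜ[ℂ] star b)
    (hWstar : ∀ x, W (st x) = st (W x))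
    (hpent :
      letI assoc := (TensorProduct.assoc ℂ A A A).toLinearMap
      letI assoc' := (TensorProduct.assoc ℂ A A A).symm.toLinearMap
      letI σ : A ⊗[ℂ] A →ₗ[ℂ] A ⊗[ℂ] A := (TensorProduct.comm ℂ A A).toLinearMap
      letI W₁₂ := LinearMap.rTensor A W.toLinearMap
      letI W₂₃ := assoc' ∘ₗ LinearMap.lTensor A W.toLinearMap ∘ₗ assoc
      letI σ₁₂fl := LinearMap.rTensor A σ
      letI W₁₃ := σ₁₂fl ∘ₗ W₂₃ ∘ₗ σ₁₂fl
      W₁₂ ∘ₗ W₁₃ ∘ₗ W₂₃ = W₂₃ ∘ₗ W₁₂) :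
    letI Δ : A →ₐ[ℂ] A ⊗[ℂ] A :=
      W.comp (Algebra.TensorProduct.includeLeft : A →ₐ[ℂ] A ⊗[ℂ] A)
    ∀ a, (Algebra.TensorProduct.assoc ℂ ℂ ℂ A A A)
        ((Algebra.TensorProduct.map Δ (AlgHom.id ℂ A)) (Δ a))
      = (Algebra.TensorProduct.map (AlgHom.id ℂ A) Δ) (Δ a) :=
  pentagon_homomorphism_gives_comultiplication_general W hpent
end

section
/- Let A be a unital C*-algebra and W : A ⊗ A → A ⊗ A a unital *-homomorphism satisfying the pentagon equation. Then the map Δ̂ := Σ W Σ ∘ Δᴿ, where Δᴿ(a) = 1 ⊗ a and Σ is the flip on A ⊗ A, is a coassociative comultiplication on A. -/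
open TensorProduct

/-! With `Δ̂ a = Σ W (a ⊗ 1)`, the two iterated comultiplications of `a`, after reversing the
three tensor factors, become `W₂₃ (W (a ⊗ 1) ⊗ 1)` and `W₁₂ W₁₃ ((a ⊗ 1) ⊗ 1)`. Since `W` is
unital, `W₂₃` fixes `(a ⊗ 1) ⊗ 1`, so the pentagon equation at `(a ⊗ 1) ⊗ 1` identifies the two. -/

namespace PentagonHom

variable {R A : Type*} [CommSemiring R] [Semiring A] [Algebra R A]

def leg₁₂ (W : A ⊗[R] A →ₐ[R] A ⊗[R] A) : (A ⊗[R] A) ⊗[R] A →ₗ[R] (A ⊗[R] A) ⊗[R] A :=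
  LinearMap.rTensor A W.toLinearMap

def leg₂₃ (W : A ⊗[R] A →ₐ[R] A ⊗[R] A) : (A ⊗[R] A) ⊗[R] A →ₗ[R] (A ⊗[R] A) ⊗[R] A :=
  (TensorProduct.assoc R A A A).symm.toLinearMap ∘ₗ LinearMap.lTensor A W.toLinearMap ∘ₗ
    (TensorProduct.assoc R A A A).toLinearMap

def leg₁₃ (W : A ⊗[R] A →ₐ[R] A ⊗[R] A) : (A ⊗[R] A) ⊗[R] A →ₗ[R] (A ⊗[R] A) ⊗[R] A :=
  LinearMap.rTensor A (TensorProduct.comm R A A).toLinearMap ∘ₗ leg₂₃ W ∘ₗ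
    LinearMap.rTensor A (TensorProduct.comm R A A).toLinearMap

def IsPentagonal (W : A ⊗[R] A →ₐ[R] A ⊗[R] A) : Prop :=
  leg₁₂ W ∘ₗ leg₁₃ W ∘ₗ leg₂₃ W = leg₂₃ W ∘ₗ leg₁₂ W

def flippedComul (W : A ⊗[R] A →ₐ[R] A ⊗[R] A) : A →ₐ[R] A ⊗[R] A :=
  ((Algebra.TensorProduct.comm R A A).toAlgHom.comp
      (W.comp (Algebra.TensorProduct.comm R A A).toAlgHom)).comp
    Algebra.TensorProduct.includeRight

def reverse : (A ⊗[R] A) ⊗[R] A →ₗ[R] A ⊗[R] (A ⊗[R] A) :=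
  (TensorProduct.comm R (A ⊗[R] A) A).toLinearMap ∘ₗ
    LinearMap.rTensor A (TensorProduct.comm R A A).toLinearMap

variable (W : A ⊗[R] A →ₐ[R] A ⊗[R] A)

theorem flippedComul_apply (a : A) : flippedComul W a = TensorProduct.comm R A A (W (a ⊗ₜ 1)) :=
  rfl

theorem leg₁₂_tmul (x : A ⊗[R] A) (c : A) : leg₁₂ W (x ⊗ₜ c) = W x ⊗ₜ c := rfl

theorem leg₂₃_tmul (a b c : A) :
    leg₂₃ W ((a ⊗ₜ b) ⊗ₜ c) = (TensorProduct.assoc R A A A).symm (a ⊗ₜ W (b ⊗ₜ c)) := rfl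

theorem leg₁₃_tmul (a b c : A) :
    leg₁₃ W ((a ⊗ₜ b) ⊗ₜ c) = LinearMap.rTensor A (TensorProduct.comm R A A).toLinearMap
      ((TensorProduct.assoc R A A A).symm (b ⊗ₜ W (a ⊗ₜ c))) := rfl

theorem assoc_comm_tmul (w : A ⊗[R] A) (p : A) :
    Algebra.TensorProduct.assoc R R R A A A (TensorProduct.comm R A A w ⊗ₜ p)
      = reverse ((TensorProduct.assoc R A A A).symm (p ⊗ₜ w)) := by
  induction w using TensorProduct.induction_on with
  | zero => simp
  | tmul b c => rfl
  | add x y hx hy => simp only [map_add, add_tmul, tmul_add, hx, hy]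

theorem assoc_map_flippedComul_comm (v : A ⊗[R] A) :
    Algebra.TensorProduct.assoc R R R A A A
        (Algebra.TensorProduct.map (flippedComul W) (AlgHom.id R A) (TensorProduct.comm R A A v))
      = reverse (leg₂₃ W (v ⊗ₜ 1)) := by
  induction v using TensorProduct.induction_on with
  | zero => simp
  | tmul p q => exact assoc_comm_tmul (W (q ⊗ₜ 1)) p
  | add x y hx hy => simp only [map_add, add_tmul, hx, hy]

theorem map_flippedComul_comm (v : A ⊗[R] A) :
    Algebra.TensorProduct.map (AlgHom.id R A) (flippedComul W) (TensorProduct.comm R A A v)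
      = reverse (leg₁₂ W (LinearMap.rTensor A (TensorProduct.comm R A A).toLinearMap
          ((TensorProduct.assoc R A A A).symm (1 ⊗ₜ v)))) := by
  induction v using TensorProduct.induction_on with
  | zero => simp
  | tmul p q => rfl
  | add x y hx hy => simp only [map_add, tmul_add, hx, hy]

theorem IsPentagonal.at_tmul_one_tmul_one {W : A ⊗[R] A →ₐ[R] A ⊗[R] A} (hW : IsPentagonal W)
    (a : A) :
    leg₁₂ W (LinearMap.rTensor A (TensorProduct.comm R A A).toLinearMap
        ((TensorProduct.assoc R A A A).symm (1 ⊗ₜ W (a ⊗ₜ 1))))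
      = leg₂₃ W (W (a ⊗ₜ 1) ⊗ₜ 1) := by
  have hfix : leg₂₃ W ((a ⊗ₜ[R] (1 : A)) ⊗ₜ[R] (1 : A)) = (a ⊗ₜ 1) ⊗ₜ 1 := by
    rw [leg₂₃_tmul, ← Algebra.TensorProduct.one_def, map_one]
    rfl
  simpa only [LinearMap.comp_apply, hfix, leg₁₃_tmul, leg₁₂_tmul]
    using LinearMap.congr_fun hW ((a ⊗ₜ[R] (1 : A)) ⊗ₜ[R] (1 : A))

theorem flippedComul_coassoc (hW : IsPentagonal W) (a : A) :
    Algebra.TensorProduct.assoc R R R A A A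
        (Algebra.TensorProduct.map (flippedComul W) (AlgHom.id R A) (flippedComul W a))
      = Algebra.TensorProduct.map (AlgHom.id R A) (flippedComul W) (flippedComul W a) := by
  rw [flippedComul_apply, assoc_map_flippedComul_comm, map_flippedComul_comm,
    hW.at_tmul_one_tmul_one]

end PentagonHom

theorem pentagon_homomorphism_gives_flipped_comultiplication_general
    {A : Type*} [CStarAlgebra A]
    (W : A ⊗[ℂ] A →ₐ[ℂ] A ⊗[ℂ] A)
    (hpent :
      letI assoc := (TensorProduct.assoc ℂ A A A).toLinearMap
      letI assoc' := (TensorProduct.assoc ℂ A A A).symm.toLinearMap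
      letI σ : A ⊗[ℂ] A →ₗ[ℂ] A ⊗[ℂ] A := (TensorProduct.comm ℂ A A).toLinearMap
      letI W₁₂ := LinearMap.rTensor A W.toLinearMap
      letI W₂₃ := assoc' ∘ₗ LinearMap.lTensor A W.toLinearMap ∘ₗ assoc
      letI σ₁₂fl := LinearMap.rTensor A σ
      letI W₁₃ := σ₁₂fl ∘ₗ W₂₃ ∘ₗ σ₁₂fl
      W₁₂ ∘ₗ W₁₃ ∘ₗ W₂₃ = W₂₃ ∘ₗ W₁₂) :
    letI Δhat : A →ₐ[ℂ] A ⊗[ℂ] A :=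
      ((Algebra.TensorProduct.comm ℂ A A).toAlgHom.comp
          (W.comp (Algebra.TensorProduct.comm ℂ A A).toAlgHom)).comp
        (Algebra.TensorProduct.includeRight : A →ₐ[ℂ] A ⊗[ℂ] A)
    ∀ a, (Algebra.TensorProduct.assoc ℂ ℂ ℂ A A A)
        ((Algebra.TensorProduct.map Δhat (AlgHom.id ℂ A)) (Δhat a))
      = (Algebra.TensorProduct.map (AlgHom.id ℂ A) Δhat) (Δhat a) :=
  PentagonHom.flippedComul_coassoc W hpent

/-- Let `A` be a unital C*-algebra and `W : A ⊗ A → A ⊗ A` a unital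
*-homomorphism satisfying the pentagon equation.  Then `Δ̂ := Σ W Σ ∘ Δᴿ`, where
`Δᴿ(a) = 1 ⊗ a` and `Σ` is the flip on `A ⊗ A`, is a coassociative comultiplication on `A`.

The tensor product is the algebraic one (Mathlib has no minimal C*-tensor product), the star
operation on `A ⊗ A` is encoded by the additive map `st`, and the legs/associators are as in
the usual multiplicative-unitary conventions. -/
theorem pentagon_homomorphism_gives_flipped_comultiplication
    {A : Type*} [CStarAlgebra A]
    (W : A ⊗[ℂ] A →ₐ[ℂ] A ⊗[ℂ] A)
    (st : A ⊗[ℂ] A → A ⊗[ℂ] A)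
    (st_add : ∀ x y, st (x + y) = st x + st y)
    (st_tmul : ∀ a b : A, st (a ⊗ₜ[ℂ] b) = star a ⊗ₜ[ℂ] star b)
    (hWstar : ∀ x, W (st x) = st (W x))
    (hpent :
      letI assoc := (TensorProduct.assoc ℂ A A A).toLinearMap
      letI assoc' := (TensorProduct.assoc ℂ A A A).symm.toLinearMap
      letI σ : A ⊗[ℂ] A →ₗ[ℂ] A ⊗[ℂ] A := (TensorProduct.comm ℂ A A).toLinearMap
      letI W₁₂ := LinearMap.rTensor A W.toLinearMap
      letI W₂₃ := assoc' ∘ₗ LinearMap.lTensor A W.toLinearMap ∘ₗ assoc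
      letI σ₁₂fl := LinearMap.rTensor A σ
      letI W₁₃ := σ₁₂fl ∘ₗ W₂₃ ∘ₗ σ₁₂fl
      W₁₂ ∘ₗ W₁₃ ∘ₗ W₂₃ = W₂₃ ∘ₗ W₁₂) :
    letI Δhat : A →ₐ[ℂ] A ⊗[ℂ] A :=
      ((Algebra.TensorProduct.comm ℂ A A).toAlgHom.comp
          (W.comp (Algebra.TensorProduct.comm ℂ A A).toAlgHom)).comp
        (Algebra.TensorProduct.includeRight : A →ₐ[ℂ] A ⊗[ℂ] A)
    ∀ a, (Algebra.TensorProduct.assoc ℂ ℂ ℂ A A A)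
        ((Algebra.TensorProduct.map Δhat (AlgHom.id ℂ A)) (Δhat a))
      = (Algebra.TensorProduct.map (AlgHom.id ℂ A) Δhat) (Δhat a) :=
  pentagon_homomorphism_gives_flipped_comultiplication_general W hpent
end
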